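/- Let φ be a 3CNF formula with n > 0 variables and m > 0 clauses, each clause a disjunction of exactly three literals over pairwise distinct variables, and let k > 0 be an integer. Then there exists a function Map from truth assignments of φ (functions from the variables of φ to {0,1}) to sets of databases such that: (1) for every truth assignment τ, Map(τ) ⊆ rep(db_k(φ), Σ); (2) for every D′ ∈ rep(db_k(φ), Σ) there is a truth assignment τ with D′ ∈ Map(τ); and (3) for every truth assignment τ, |Map(τ)| = 2^{k·c_τ}, where c_τ is the number of clauses of φ that are true under τ. -/
import Mathlib


open scoped Classical

/-- A fact over relation name `rel`, assigning a constant to each attribute. -/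
structure DBFact (Rel Attr Const : Type*) where
  rel : Rel
  val : Attr → Const

/-- A functional dependency `rel : lhs → rhs`. -/
structure DBFD (Rel Attr : Type*) where
  rel : Rel
  lhs : Set Attr
  rhs : Set Attr

/-- A term of a conjunctive query: a variable or a constant. -/
inductive DBTerm (Var Const : Type*) where
  | var : Var → DBTerm Var Const
  | const : Const → DBTerm Var Const

/-- An atom of a conjunctive query. -/
structure DBAtom (Rel Attr Var Const : Type*) where
  rel : Rel
  val : Attr → DBTerm Var Const

variable {Rel Attr Var Const : Type*}

/-- A database satisfies a single FD. -/
def satFD (D : Finset (DBFact Rel Attr Const)) (φ : DBFD Rel Attr) : Prop :=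
  ∀ f ∈ D, ∀ g ∈ D, f.rel = φ.rel → g.rel = φ.rel →
    (∀ A ∈ φ.lhs, f.val A = g.val A) → ∀ A ∈ φ.rhs, f.val A = g.val A

/-- A database satisfies a set of FDs. -/
def satFDs (D : Finset (DBFact Rel Attr Const)) (S : Set (DBFD Rel Attr)) : Prop :=
  ∀ φ ∈ S, satFD D φ

/-- `E` is a repair of `D` w.r.t. `S`: an inclusion-maximal consistent subset of `D`. -/
def isRepair (S : Set (DBFD Rel Attr)) (D E : Finset (DBFact Rel Attr Const)) : Prop :=
  E ⊆ D ∧ satFDs E S ∧ ∀ F, E ⊆ F → F ⊆ D → satFDs F S → F = E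

/-- The set of repairs of `D` w.r.t. `S`. -/
noncomputable def rep (D : Finset (DBFact Rel Attr Const)) (S : Set (DBFD Rel Attr)) :
    Finset (Finset (DBFact Rel Attr Const)) :=
  D.powerset.filter (fun E => isRepair S D E)

/-- Applying a homomorphism (a map from variables to constants) to an atom yields a fact. -/
def applyHom (h : Var → Const) (α : DBAtom Rel Attr Var Const) : DBFact Rel Attr Const :=
  ⟨α.rel, fun A => match α.val A with
    | DBTerm.var v => h v
    | DBTerm.const c => c⟩

/-- `D ⊨ Q`: there is a homomorphism from the CQ `Q` into `D`. -/
def entails (D : Finset (DBFact Rel Attr Const)) (Q : Finset (DBAtom Rel Attr Var Const)) :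
    Prop :=
  ∃ h : Var → Const, ∀ α ∈ Q, applyHom h α ∈ D

/-- The repairs of `D` w.r.t. `S` that entail `Q`. -/
noncomputable def repQ (D : Finset (DBFact Rel Attr Const)) (S : Set (DBFD Rel Attr))
    (Q : Finset (DBAtom Rel Attr Var Const)) : Finset (Finset (DBFact Rel Attr Const)) :=
  (rep D S).filter (fun E => entails E Q)

/-- The relative frequency of `Q` w.r.t. `D` and `S`. -/
noncomputable def rfreq (Q : Finset (DBAtom Rel Attr Var Const))
    (D : Finset (DBFact Rel Attr Const)) (S : Set (DBFD Rel Attr)) : ℚ :=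
  ((repQ D S Q).card : ℚ) / ((rep D S).card : ℚ)

/-- `Q` is self-join-free: no relation name occurs in two distinct atoms. -/
def sjf (Q : Finset (DBAtom Rel Attr Var Const)) : Prop :=
  ∀ α ∈ Q, ∀ β ∈ Q, α.rel = β.rel → α = β

/-- A canonical set of FDs with an LHS chain, given by the chain
`R : X₁ → Y₁, …, R : Xₙ → Yₙ` for each relation name `R`, with
`X₁ ⊊ X₂ ⊊ ⋯ ⊊ Xₙ`, each `Y_i` nonempty, `X_i ∩ Y_j = ∅` for all `i,j`,
and `Y_i ∩ Y_j = ∅` for `i ≠ j`. -/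
def canonicalChain (chain : Rel → List (Set Attr × Set Attr)) : Prop :=
  ∀ R : Rel,
    ((chain R).Pairwise fun a b => a.1 ⊂ b.1) ∧
    (∀ xy ∈ chain R, (xy.2 : Set Attr).Nonempty) ∧
    (∀ xy ∈ chain R, ∀ xy' ∈ chain R, xy.1 ∩ xy'.2 = ∅) ∧
    ((chain R).Pairwise fun a b => a.2 ∩ b.2 = ∅)

/-- The set of FDs induced by a chain. -/
def chainFDs (chain : Rel → List (Set Attr × Set Attr)) : Set (DBFD Rel Attr) :=
  {φ | ∃ xy ∈ chain φ.rel, φ.lhs = xy.1 ∧ φ.rhs = xy.2}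

/-- The `i`-th FD of the chain `L` has some attribute carrying a variable in atom `α`. -/
def chainVarAt (L : List (Set Attr × Set Attr)) (α : DBAtom Rel Attr Var Const) (i : ℕ) :
    Prop :=
  ∃ xy, L[i]? = some xy ∧ ∃ A ∈ xy.1 ∪ xy.2, ∃ v, α.val A = DBTerm.var v

/-- The index of the primary FD of the chain `L` w.r.t. the atom `α` (if it exists):
the first FD some of whose attributes carries a variable in `α`. -/
noncomputable def primaryIdx (L : List (Set Attr × Set Attr))
    (α : DBAtom Rel Attr Var Const) : Option ℕ :=
  if h : ∃ i, chainVarAt L α i then some (Nat.find h) else none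

/-- The primary FD of the chain `L` w.r.t. the atom `α` (if it exists). -/
noncomputable def primaryFD (L : List (Set Attr × Set Attr))
    (α : DBAtom Rel Attr Var Const) : Option (Set Attr × Set Attr) :=
  (primaryIdx L α).bind fun i => L[i]?

/-- The primary prefix of the chain `L` w.r.t. the atom `α`: the FDs strictly before the
primary FD, or the whole chain if there is no primary FD. -/
noncomputable def primaryPrefix (L : List (Set Attr × Set Attr))
    (α : DBAtom Rel Attr Var Const) : List (Set Attr × Set Attr) :=
  L.take ((primaryIdx L α).getD L.length)

/-- The primary-lhs positions (attributes) of the atom `α` w.r.t. the chain `L`. -/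
noncomputable def primaryLhs (L : List (Set Attr × Set Attr))
    (α : DBAtom Rel Attr Var Const) : Set Attr :=
  match primaryFD L α with
  | some xy => xy.1
  | none => Set.univ

/-- The variables of `α` occurring at primary-lhs positions. -/
noncomputable def pvar (L : List (Set Attr × Set Attr))
    (α : DBAtom Rel Attr Var Const) : Set Var :=
  {v | ∃ A ∈ primaryLhs L α, α.val A = DBTerm.var v}

/-- A liaison variable of `Q`: a variable with more than one occurrence in `Q`. -/
def liaison (Q : Finset (DBAtom Rel Attr Var Const)) (v : Var) : Prop :=
  ∃ α ∈ Q, ∃ β ∈ Q, ∃ A B, α.val A = DBTerm.var v ∧ β.val B = DBTerm.var v ∧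
    (α ≠ β ∨ A ≠ B)

/-- The complex part `comp(Q,Σ)` of `Q` w.r.t. the chain. -/
noncomputable def compPart (chain : Rel → List (Set Attr × Set Attr))
    (Q : Finset (DBAtom Rel Attr Var Const)) : Finset (DBAtom Rel Attr Var Const) :=
  Q.filter fun α => ∃ A, A ∉ primaryLhs (chain α.rel) α ∧
    ((∃ c, α.val A = DBTerm.const c) ∨ ∃ v, α.val A = DBTerm.var v ∧ liaison Q v) ∧
    ∀ xy ∈ primaryPrefix (chain α.rel) α, A ∉ xy.1 ∪ xy.2

/-- The fact `f` agrees with the atom `α` at attribute `A`, i.e. `α[A]` is the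
constant `f[A]`. -/
def agreesAt (f : DBFact Rel Attr Const) (α : DBAtom Rel Attr Var Const) (A : Attr) : Prop :=
  α.val A = DBTerm.const (f.val A)

/-- `D_conf^{Σ,Q}`: the facts of `D` conflicting with `Q` via an FD of the primary prefix. -/
noncomputable def dconf (chain : Rel → List (Set Attr × Set Attr))
    (Q : Finset (DBAtom Rel Attr Var Const)) (D : Finset (DBFact Rel Attr Const)) :
    Finset (DBFact Rel Attr Const) :=
  D.filter fun f => ∃ α ∈ Q, α.rel = f.rel ∧
    ∃ xy ∈ primaryPrefix (chain α.rel) α,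
      (∀ A ∈ xy.1, agreesAt f α A) ∧ ∃ B ∈ xy.2, ¬ agreesAt f α B

/-- `D_ind^{Σ,Q}`: the facts of `D \ D_conf^{Σ,Q}` disagreeing with `Q` on the lhs of an
FD of the primary prefix. -/
noncomputable def dind (chain : Rel → List (Set Attr × Set Attr))
    (Q : Finset (DBAtom Rel Attr Var Const)) (D : Finset (DBFact Rel Attr Const)) :
    Finset (DBFact Rel Attr Const) :=
  (D \ dconf chain Q D).filter fun f => ∃ α ∈ Q, α.rel = f.rel ∧
    ∃ xy ∈ primaryPrefix (chain α.rel) α, ∃ A ∈ xy.1, ¬ agreesAt f α A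

/-- The active domain of `D`: the constants occurring in `D`. -/
noncomputable def adom [Fintype Attr] (D : Finset (DBFact Rel Attr Const)) : Finset Const :=
  D.biUnion fun f => Finset.univ.image f.val

/-- Substituting a constant for a variable in a term. -/
noncomputable def substTerm (x : Var) (c : Const) : DBTerm Var Const → DBTerm Var Const
  | DBTerm.var v => if v = x then DBTerm.const c else DBTerm.var v
  | DBTerm.const d => DBTerm.const d

/-- Substituting a constant for a variable in an atom. -/
noncomputable def substAtom (x : Var) (c : Const) (α : DBAtom Rel Attr Var Const) :
    DBAtom Rel Attr Var Const :=
  ⟨α.rel, fun A => substTerm x c (α.val A)⟩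

/-- `Q_{x↦c}`: the query obtained from `Q` by replacing the variable `x` with `c`. -/
noncomputable def substQ (x : Var) (c : Const) (Q : Finset (DBAtom Rel Attr Var Const)) :
    Finset (DBAtom Rel Attr Var Const) :=
  Q.image (substAtom x c)

/-- The variables occurring in `Q`. -/
def qvars (Q : Finset (DBAtom Rel Attr Var Const)) : Set Var :=
  {v | ∃ α ∈ Q, ∃ A, α.val A = DBTerm.var v}

/-- `S` has an LHS chain: the left-hand sides of FDs over the same relation are
⊆-comparable. -/
def hasLHSChain (S : Set (DBFD Rel Attr)) : Prop :=
  ∀ φ ∈ S, ∀ ψ ∈ S, φ.rel = ψ.rel → φ.lhs ⊆ ψ.lhs ∨ ψ.lhs ⊆ φ.lhs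


/-- The four attributes (Var, VValue, Clause, LValue) of the relation name `R`. -/
inductive Attr4 where
  | Var | VValue | Clause | LValue
deriving DecidableEq

instance : Fintype Attr4 :=
  ⟨{Attr4.Var, Attr4.VValue, Attr4.Clause, Attr4.LValue}, by intro a; cases a <;> simp⟩

/-- The constants used by the database `db_k(φ)`: the variables of `φ`, the two truth
values, the clause-copy identifiers `⟨C_i^j, b⟩`, and the fresh constant `⋆`. -/
inductive GConst (n m k : ℕ) where
  | var : Fin n → GConst n m k
  | bit : Bool → GConst n m k
  | clid : Fin m → Fin k → Bool → GConst n m k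
  | star : GConst n m k

/-- A literal is a pair (variable, polarity); `lval ℓ v` is the truth value of `ℓ` when
its variable is assigned `v`. -/
def lval {n : ℕ} (ℓ : Fin n × Bool) (v : Bool) : Bool :=
  if ℓ.2 then v else !v

/-- The FD set `Σ = {R : Var → VValue, R : Clause → LValue}` over the single 4-ary
relation name. -/
def sigmaGap : Set (DBFD Unit Attr4) :=
  {⟨(), {Attr4.Var}, {Attr4.VValue}⟩, ⟨(), {Attr4.Clause}, {Attr4.LValue}⟩}

/-- The database `db_k(φ)` for the 3CNF formula `φ` with clauses
`C i = ℓ¹ ∨ ℓ² ∨ ℓ³` given by `C : Fin m → Fin 3 → Fin n × Bool`. -/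
noncomputable def dbk (n m k : ℕ) (C : Fin m → Fin 3 → Fin n × Bool) :
    Finset (DBFact Unit Attr4 (GConst n m k)) :=
  ((Finset.univ : Finset (Fin m × Fin k × Fin 3 × Bool)).image fun q =>
    ⟨(), fun A => match A with
      | Attr4.Var => GConst.var (C q.1 q.2.2.1).1
      | Attr4.VValue => GConst.bit q.2.2.2
      | Attr4.Clause => GConst.clid q.1 q.2.1 (lval (C q.1 q.2.2.1) q.2.2.2)
      | Attr4.LValue => GConst.bit (lval (C q.1 q.2.2.1) q.2.2.2)⟩) ∪
  ((Finset.univ : Finset (Fin m × Fin k)).image fun q =>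
    ⟨(), fun A => match A with
      | Attr4.Var => GConst.star
      | Attr4.VValue => GConst.star
      | Attr4.Clause => GConst.clid q.1 q.2 true
      | Attr4.LValue => GConst.bit false⟩)

/-- Clause `i` of the formula is true under the truth assignment `τ`. -/
def clauseTrue {n m : ℕ} (C : Fin m → Fin 3 → Fin n × Bool) (τ : Fin n → Bool)
    (i : Fin m) : Prop :=
  ∃ p : Fin 3, lval (C i p) (τ (C i p).1) = true

section GapAux

variable {n m k : ℕ}

/-- The first kind of fact of `db_k(φ)`. -/
def factF (n m k : ℕ) (C : Fin m → Fin 3 → Fin n × Bool) (i : Fin m) (j : Fin k)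
    (p : Fin 3) (v : Bool) : DBFact Unit Attr4 (GConst n m k) :=
  ⟨(), fun A => match A with
    | Attr4.Var => GConst.var (C i p).1
    | Attr4.VValue => GConst.bit v
    | Attr4.Clause => GConst.clid i j (lval (C i p) v)
    | Attr4.LValue => GConst.bit (lval (C i p) v)⟩

/-- The second kind of fact of `db_k(φ)`. -/
def factG (n m k : ℕ) (i : Fin m) (j : Fin k) : DBFact Unit Attr4 (GConst n m k) :=
  ⟨(), fun A => match A with
    | Attr4.Var => GConst.star
    | Attr4.VValue => GConst.star
    | Attr4.Clause => GConst.clid i j true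
    | Attr4.LValue => GConst.bit false⟩

@[simp] lemma factF_Var (C : Fin m → Fin 3 → Fin n × Bool) (i j p v) :
    (factF n m k C i j p v).val Attr4.Var = GConst.var (C i p).1 := rfl
@[simp] lemma factF_VValue (C : Fin m → Fin 3 → Fin n × Bool) (i j p v) :
    (factF n m k C i j p v).val Attr4.VValue = GConst.bit v := rfl
@[simp] lemma factF_Clause (C : Fin m → Fin 3 → Fin n × Bool) (i j p v) :
    (factF n m k C i j p v).val Attr4.Clause = GConst.clid i j (lval (C i p) v) := rfl
@[simp] lemma factF_LValue (C : Fin m → Fin 3 → Fin n × Bool) (i j p v) :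
    (factF n m k C i j p v).val Attr4.LValue = GConst.bit (lval (C i p) v) := rfl
@[simp] lemma factG_Var (i : Fin m) (j : Fin k) :
    (factG n m k i j).val Attr4.Var = GConst.star := rfl
@[simp] lemma factG_VValue (i : Fin m) (j : Fin k) :
    (factG n m k i j).val Attr4.VValue = GConst.star := rfl
@[simp] lemma factG_Clause (i : Fin m) (j : Fin k) :
    (factG n m k i j).val Attr4.Clause = GConst.clid i j true := rfl
@[simp] lemma factG_LValue (i : Fin m) (j : Fin k) :
    (factG n m k i j).val Attr4.LValue = GConst.bit false := rfl

lemma dbk_eq (C : Fin m → Fin 3 → Fin n × Bool) :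
    dbk n m k C =
      ((Finset.univ : Finset (Fin m × Fin k × Fin 3 × Bool)).image fun q =>
        factF n m k C q.1 q.2.1 q.2.2.1 q.2.2.2) ∪
      ((Finset.univ : Finset (Fin m × Fin k)).image fun q => factG n m k q.1 q.2) := rfl

lemma mem_dbk {C : Fin m → Fin 3 → Fin n × Bool} {f : DBFact Unit Attr4 (GConst n m k)} :
    f ∈ dbk n m k C ↔
      (∃ i j p v, f = factF n m k C i j p v) ∨ (∃ i j, f = factG n m k i j) := by
  rw [dbk_eq, Finset.mem_union, Finset.mem_image, Finset.mem_image]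
  constructor
  · rintro (⟨⟨i, j, p, v⟩, -, rfl⟩ | ⟨⟨i, j⟩, -, rfl⟩)
    · exact Or.inl ⟨i, j, p, v, rfl⟩
    · exact Or.inr ⟨i, j, rfl⟩
  · rintro (⟨i, j, p, v, rfl⟩ | ⟨i, j, rfl⟩)
    · exact Or.inl ⟨⟨i, j, p, v⟩, Finset.mem_univ _, rfl⟩
    · exact Or.inr ⟨⟨i, j⟩, Finset.mem_univ _, rfl⟩

lemma factF_mem_dbk (C : Fin m → Fin 3 → Fin n × Bool) (i j p v) :
    factF n m k C i j p v ∈ dbk n m k C := mem_dbk.mpr (Or.inl ⟨i, j, p, v, rfl⟩)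

lemma factG_mem_dbk (C : Fin m → Fin 3 → Fin n × Bool) (i : Fin m) (j : Fin k) :
    factG n m k i j ∈ dbk n m k C := mem_dbk.mpr (Or.inr ⟨i, j, rfl⟩)

lemma factF_inj {C : Fin m → Fin 3 → Fin n × Bool}
    (hd : ∀ i : Fin m, Function.Injective fun p => (C i p).1)
    {i i' : Fin m} {j j' : Fin k} {p p' : Fin 3} {v v' : Bool}
    (h : factF n m k C i j p v = factF n m k C i' j' p' v') :
    i = i' ∧ j = j' ∧ p = p' ∧ v = v' := by
  have hV : GConst.var (n := n) (m := m) (k := k) (C i p).1 = GConst.var (C i' p').1 :=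
    congrArg (fun f => f.val Attr4.Var) h
  have hVV : GConst.bit (n := n) (m := m) (k := k) v = GConst.bit v' :=
    congrArg (fun f => f.val Attr4.VValue) h
  have hC : GConst.clid (n := n) i j (lval (C i p) v) = GConst.clid i' j' (lval (C i' p') v') :=
    congrArg (fun f => f.val Attr4.Clause) h
  simp only [GConst.var.injEq] at hV
  simp only [GConst.bit.injEq] at hVV
  simp only [GConst.clid.injEq] at hC
  obtain ⟨hi, hj, -⟩ := hC
  subst hi; subst hj; subst hVV
  exact ⟨rfl, rfl, hd i hV, rfl⟩

lemma factF_ne_factG {C : Fin m → Fin 3 → Fin n × Bool} {i i' : Fin m} {j j' : Fin k}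
    {p : Fin 3} {v : Bool} : factF n m k C i j p v ≠ factG n m k i' j' := by
  intro h
  have : GConst.var (n := n) (m := m) (k := k) (C i p).1 = GConst.star :=
    congrArg (fun f => f.val Attr4.Var) h
  exact absurd this (by simp)

lemma factG_inj {i i' : Fin m} {j j' : Fin k}
    (h : factG n m k i j = factG n m k i' j') : i = i' ∧ j = j' := by
  have : GConst.clid (n := n) i j true = GConst.clid i' j' true :=
    congrArg (fun f => f.val Attr4.Clause) h
  simp only [GConst.clid.injEq] at this
  exact ⟨this.1, this.2.1⟩

/-- The candidate repair associated with an assignment `σ` and a set `T` of clause copies. -/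
noncomputable def repDB (n m k : ℕ) (C : Fin m → Fin 3 → Fin n × Bool)
    (σ : Fin n → Bool) (T : Finset (Fin m × Fin k)) :
    Finset (DBFact Unit Attr4 (GConst n m k)) :=
  (dbk n m k C).filter fun f =>
    (∃ i j p, f = factF n m k C i j p (σ (C i p).1) ∧
      (lval (C i p) (σ (C i p).1) = false ∨ (i, j) ∉ T)) ∨
    (∃ i j, f = factG n m k i j ∧ ((i, j) ∈ T ∨ ¬ clauseTrue C σ i))

lemma repDB_subset (C : Fin m → Fin 3 → Fin n × Bool) (σ T) :
    repDB n m k C σ T ⊆ dbk n m k C := Finset.filter_subset _ _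

lemma factF_mem_repDB {C : Fin m → Fin 3 → Fin n × Bool}
    (hd : ∀ i : Fin m, Function.Injective fun p => (C i p).1) {σ T} {i j p v} :
    factF n m k C i j p v ∈ repDB n m k C σ T ↔
      v = σ (C i p).1 ∧ (lval (C i p) v = false ∨ (i, j) ∉ T) := by
  rw [repDB, Finset.mem_filter]
  constructor
  · rintro ⟨-, ⟨i', j', p', heq, hc⟩ | ⟨i', j', heq, -⟩⟩
    · obtain ⟨rfl, rfl, rfl, rfl⟩ := factF_inj hd heq
      exact ⟨rfl, hc⟩
    · exact absurd heq factF_ne_factG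
  · rintro ⟨rfl, hc⟩
    exact ⟨factF_mem_dbk C i j p _, Or.inl ⟨i, j, p, rfl, hc⟩⟩

lemma factG_mem_repDB {C : Fin m → Fin 3 → Fin n × Bool} {σ T} {i : Fin m} {j : Fin k} :
    factG n m k i j ∈ repDB n m k C σ T ↔ ((i, j) ∈ T ∨ ¬ clauseTrue C σ i) := by
  rw [repDB, Finset.mem_filter]
  constructor
  · rintro ⟨-, ⟨i', j', p', heq, -⟩ | ⟨i', j', heq, hc⟩⟩
    · exact absurd heq.symm factF_ne_factG
    · obtain ⟨rfl, rfl⟩ := factG_inj heq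
      exact hc
  · intro hc
    exact ⟨factG_mem_dbk C i j, Or.inr ⟨i, j, rfl, hc⟩⟩

/-- `(σ, T)` is a valid repair description. -/
def goodPair (C : Fin m → Fin 3 → Fin n × Bool) (σ : Fin n → Bool)
    (T : Finset (Fin m × Fin k)) : Prop :=
  (∀ q ∈ T, clauseTrue C σ q.1) ∧
  ∀ i p, ∃ i' j' p', (C i' p').1 = (C i p).1 ∧
    (lval (C i' p') (σ (C i' p').1) = false ∨ (i', j') ∉ T)

lemma satFDs_sigmaGap_iff (E : Finset (DBFact Unit Attr4 (GConst n m k))) :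
    satFDs E sigmaGap ↔
      ((∀ f ∈ E, ∀ g ∈ E, f.val Attr4.Var = g.val Attr4.Var →
          f.val Attr4.VValue = g.val Attr4.VValue) ∧
       (∀ f ∈ E, ∀ g ∈ E, f.val Attr4.Clause = g.val Attr4.Clause →
          f.val Attr4.LValue = g.val Attr4.LValue)) := by
  constructor
  · intro h
    constructor
    · intro f hf g hg hA
      refine h ⟨(), {Attr4.Var}, {Attr4.VValue}⟩ (Or.inl rfl) f hf g hg rfl rfl ?_
        Attr4.VValue rfl
      intro A hA'
      rw [Set.mem_singleton_iff] at hA'; subst hA'; exact hA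
    · intro f hf g hg hA
      refine h ⟨(), {Attr4.Clause}, {Attr4.LValue}⟩ (Or.inr rfl) f hf g hg rfl rfl ?_
        Attr4.LValue rfl
      intro A hA'
      rw [Set.mem_singleton_iff] at hA'; subst hA'; exact hA
  · rintro ⟨h1, h2⟩ φ hφ
    rcases hφ with rfl | rfl
    · intro f hf g hg _ _ hl A hA
      rw [Set.mem_singleton_iff] at hA; subst hA
      exact h1 f hf g hg (hl Attr4.Var rfl)
    · intro f hf g hg _ _ hl A hA
      rw [Set.mem_singleton_iff] at hA; subst hA
      exact h2 f hf g hg (hl Attr4.Clause rfl)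

lemma lval_flip (ℓ : Fin n × Bool) (v : Bool) : lval ℓ (!v) = !(lval ℓ v) := by
  cases hb : ℓ.2 <;> simp [lval, hb]

lemma bool_ne_false {b : Bool} (h : ¬ b = false) : b = true := by
  cases b
  · exact absurd rfl h
  · rfl

lemma repDB_satFDs {C : Fin m → Fin 3 → Fin n × Bool}
    (hd : ∀ i : Fin m, Function.Injective fun p => (C i p).1) {σ T}
    (hT : ∀ q ∈ T, clauseTrue C σ q.1) :
    satFDs (repDB n m k C σ T) sigmaGap := by
  rw [satFDs_sigmaGap_iff]
  constructor
  · intro f hf g hg hA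
    rcases mem_dbk.mp (repDB_subset C σ T hf) with ⟨i, j, p, v, rfl⟩ | ⟨i, j, rfl⟩ <;>
      rcases mem_dbk.mp (repDB_subset C σ T hg) with ⟨i', j', p', v', rfl⟩ | ⟨i', j', rfl⟩
    · simp only [factF_Var, GConst.var.injEq] at hA
      have h1 := ((factF_mem_repDB hd).mp hf).1
      have h2 := ((factF_mem_repDB hd).mp hg).1
      simp only [factF_VValue, GConst.bit.injEq]
      rw [h1, h2, hA]
    · simp only [factF_Var, factG_Var] at hA
      exact absurd hA (by simp)
    · simp only [factF_Var, factG_Var] at hA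
      exact absurd hA (by simp)
    · rfl
  · intro f hf g hg hA
    rcases mem_dbk.mp (repDB_subset C σ T hf) with ⟨i, j, p, v, rfl⟩ | ⟨i, j, rfl⟩ <;>
      rcases mem_dbk.mp (repDB_subset C σ T hg) with ⟨i', j', p', v', rfl⟩ | ⟨i', j', rfl⟩
    · simp only [factF_Clause, GConst.clid.injEq] at hA
      simp only [factF_LValue, GConst.bit.injEq]
      exact hA.2.2
    · simp only [factF_Clause, factG_Clause, GConst.clid.injEq] at hA
      obtain ⟨rfl, rfl, hlv⟩ := hA
      have h1 := (factF_mem_repDB hd).mp hf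
      have h2 := factG_mem_repDB.mp hg
      rcases h1.2 with hl | hnT
      · rw [hlv] at hl; exact absurd hl (by simp)
      · rcases h2 with hmt | hct
        · exact absurd hmt hnT
        · exact absurd ⟨p, by rw [← h1.1]; exact hlv⟩ hct
    · simp only [factF_Clause, factG_Clause, GConst.clid.injEq] at hA
      obtain ⟨rfl, rfl, hlv⟩ := hA
      have h1 := (factF_mem_repDB hd).mp hg
      have h2 := factG_mem_repDB.mp hf
      rcases h1.2 with hl | hnT
      · rw [← hlv] at hl; exact absurd hl (by simp)
      · rcases h2 with hmt | hct
        · exact absurd hmt hnT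
        · exact absurd ⟨p', by rw [← h1.1, ← hlv]⟩ hct
    · rfl

lemma repDB_isRepair {C : Fin m → Fin 3 → Fin n × Bool}
    (hd : ∀ i : Fin m, Function.Injective fun p => (C i p).1) (hk : 0 < k) {σ T}
    (hg : goodPair C σ T) :
    isRepair sigmaGap (dbk n m k C) (repDB n m k C σ T) := by
  obtain ⟨hT, hsupp⟩ := hg
  refine ⟨repDB_subset C σ T, repDB_satFDs hd hT, ?_⟩
  intro F hEF hFD hFsat
  rw [satFDs_sigmaGap_iff] at hFsat
  obtain ⟨hFVar, hFCl⟩ := hFsat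
  refine Finset.Subset.antisymm ?_ hEF
  intro f hf
  rcases mem_dbk.mp (hFD hf) with ⟨i, j, p, v, rfl⟩ | ⟨i, j, rfl⟩
  · have hvx : v = σ (C i p).1 := by
      by_contra hne
      obtain ⟨i', j', p', hx, hcase⟩ := hsupp i p
      have hmem : factF n m k C i' j' p' (σ (C i' p').1) ∈ repDB n m k C σ T :=
        (factF_mem_repDB hd).mpr ⟨rfl, hcase⟩
      have hvv := hFVar _ hf _ (hEF hmem) (by simp [hx])
      simp only [factF_VValue, GConst.bit.injEq] at hvv
      rw [hx] at hvv
      exact hne hvv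
    have hblk : lval (C i p) v = false ∨ (i, j) ∉ T := by
      by_contra hc
      push_neg at hc
      obtain ⟨h1, h2⟩ := hc
      have h1' := bool_ne_false h1
      have hGmem : factG n m k i j ∈ repDB n m k C σ T := factG_mem_repDB.mpr (Or.inl h2)
      have hvv := hFCl _ hf _ (hEF hGmem) (by simp [h1'])
      simp only [factF_LValue, factG_LValue, GConst.bit.injEq, h1'] at hvv
      exact Bool.noConfusion hvv
    exact (factF_mem_repDB hd).mpr ⟨hvx, hblk⟩
  · by_contra hnot
    rw [factG_mem_repDB] at hnot
    push_neg at hnot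
    obtain ⟨hT', hcl⟩ := hnot
    obtain ⟨p, hp⟩ := hcl
    have hmem : factF n m k C i j p (σ (C i p).1) ∈ repDB n m k C σ T :=
      (factF_mem_repDB hd).mpr ⟨rfl, Or.inr hT'⟩
    have hvv := hFCl _ hf _ (hEF hmem) (by simp [hp])
    simp only [factF_LValue, factG_LValue, GConst.bit.injEq, hp] at hvv
    exact Bool.noConfusion hvv

lemma mem_rep_iff {D E : Finset (DBFact Unit Attr4 (GConst n m k))} :
    E ∈ rep D sigmaGap ↔ isRepair sigmaGap D E := by
  rw [rep, Finset.mem_filter, Finset.mem_powerset]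
  exact ⟨fun h => h.2, fun h => ⟨h.1, h⟩⟩

lemma repair_eq_repDB {C : Fin m → Fin 3 → Fin n × Bool}
    (hd : ∀ i : Fin m, Function.Injective fun p => (C i p).1) (hk : 0 < k)
    {E : Finset (DBFact Unit Attr4 (GConst n m k))}
    (hE : isRepair sigmaGap (dbk n m k C) E) :
    ∃ σ T, goodPair C σ T ∧ E = repDB n m k C σ T := by
  classical
  obtain ⟨hsub, hsat, hmax⟩ := hE
  rw [satFDs_sigmaGap_iff] at hsat
  obtain ⟨hVar, hCl⟩ := hsat
  set σ : Fin n → Bool := fun x =>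
    if (∃ f ∈ E, f.val Attr4.Var = GConst.var (n := n) (m := m) (k := k) x ∧
        f.val Attr4.VValue = GConst.bit true) then true else false with hσdef
  have hσ : ∀ i j p v, factF n m k C i j p v ∈ E → v = σ (C i p).1 := by
    intro i j p v hfe
    by_cases hex : ∃ f ∈ E, f.val Attr4.Var = GConst.var (n := n) (m := m) (k := k) (C i p).1 ∧
        f.val Attr4.VValue = GConst.bit true
    · have hσx : σ (C i p).1 = true := by rw [hσdef]; exact if_pos hex
      obtain ⟨f, hf, hfv, hft⟩ := hex
      have hvv := hVar _ hfe _ hf (by rw [factF_Var, hfv])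
      rw [factF_VValue, hft, GConst.bit.injEq] at hvv
      rw [hσx, hvv]
    · have hσx : σ (C i p).1 = false := by rw [hσdef]; exact if_neg hex
      rw [hσx]
      by_contra hne
      have hv : v = true := bool_ne_false hne
      exact hex ⟨_, hfe, rfl, by rw [factF_VValue, hv]⟩
  set T : Finset (Fin m × Fin k) := Finset.univ.filter fun q =>
    factG n m k q.1 q.2 ∈ E ∧ clauseTrue C σ q.1 with hTdef
  have hTmem : ∀ i j, (i, j) ∈ T ↔ (factG n m k i j ∈ E ∧ clauseTrue C σ i) := by
    intro i j; rw [hTdef, Finset.mem_filter]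
    exact ⟨fun h => h.2, fun h => ⟨Finset.mem_univ _, h⟩⟩
  have memF : ∀ i j p v, factF n m k C i j p v ∈ E ↔
      (v = σ (C i p).1 ∧ (lval (C i p) v = false ∨ (i, j) ∉ T)) := by
    intro i j p v
    constructor
    · intro h
      refine ⟨hσ _ _ _ _ h, ?_⟩
      by_contra hc
      push_neg at hc
      obtain ⟨h1, h2⟩ := hc
      have h1' := bool_ne_false h1
      have hg := ((hTmem i j).mp h2).1
      have hvv := hCl _ h _ hg (by simp [h1'])
      simp only [factF_LValue, factG_LValue, GConst.bit.injEq, h1'] at hvv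
      exact Bool.noConfusion hvv
    · rintro ⟨hv, hbl⟩
      have hcons : satFDs (insert (factF n m k C i j p v) E) sigmaGap := by
        rw [satFDs_sigmaGap_iff]
        constructor
        · intro f hf g hg hA
          rcases Finset.mem_insert.mp hf with rfl | hf <;>
            rcases Finset.mem_insert.mp hg with rfl | hg
          · rfl
          · rcases mem_dbk.mp (hsub hg) with ⟨i', j', p', v', rfl⟩ | ⟨i', j', rfl⟩
            · simp only [factF_Var, GConst.var.injEq] at hA
              simp only [factF_VValue, GConst.bit.injEq]
              rw [hv, hσ _ _ _ _ hg, hA]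
            · exact absurd hA (by simp)
          · rcases mem_dbk.mp (hsub hf) with ⟨i', j', p', v', rfl⟩ | ⟨i', j', rfl⟩
            · simp only [factF_Var, GConst.var.injEq] at hA
              simp only [factF_VValue, GConst.bit.injEq]
              rw [hv, hσ _ _ _ _ hf, hA]
            · exact absurd hA (by simp)
          · exact hVar _ hf _ hg hA
        · intro f hf g hg hA
          rcases Finset.mem_insert.mp hf with rfl | hf <;>
            rcases Finset.mem_insert.mp hg with rfl | hg
          · rfl
          · rcases mem_dbk.mp (hsub hg) with ⟨i', j', p', v', rfl⟩ | ⟨i', j', rfl⟩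
            · simp only [factF_Clause, GConst.clid.injEq] at hA
              simp only [factF_LValue, GConst.bit.injEq]
              exact hA.2.2
            · simp only [factF_Clause, factG_Clause, GConst.clid.injEq] at hA
              obtain ⟨rfl, rfl, hlv⟩ := hA
              rcases hbl with hl | hnT
              · rw [hlv] at hl; exact absurd hl (by simp)
              · exact absurd ((hTmem i j).mpr ⟨hg, ⟨p, by rw [← hv]; exact hlv⟩⟩) hnT
          · rcases mem_dbk.mp (hsub hf) with ⟨i', j', p', v', rfl⟩ | ⟨i', j', rfl⟩
            · simp only [factF_Clause, GConst.clid.injEq] at hA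
              simp only [factF_LValue, GConst.bit.injEq]
              exact hA.2.2
            · simp only [factF_Clause, factG_Clause, GConst.clid.injEq] at hA
              obtain ⟨h1, h2, hlv⟩ := hA
              rcases hbl with hl | hnT
              · rw [← hlv] at hl; exact absurd hl (by simp)
              · refine absurd ((hTmem i j).mpr ⟨?_, ⟨p, ?_⟩⟩) hnT
                · rw [h1, h2] at hf; exact hf
                · rw [← hv]; exact hlv.symm
          · exact hCl _ hf _ hg hA
      have heq := hmax _ (Finset.subset_insert _ _)
        (Finset.insert_subset (factF_mem_dbk C i j p v) hsub) hcons
      rw [← heq]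
      exact Finset.mem_insert_self _ _
  have memG : ∀ i j, factG n m k i j ∈ E ↔ ((i, j) ∈ T ∨ ¬ clauseTrue C σ i) := by
    intro i j
    constructor
    · intro h
      by_cases hcl : clauseTrue C σ i
      · exact Or.inl ((hTmem i j).mpr ⟨h, hcl⟩)
      · exact Or.inr hcl
    · rintro (h | h)
      · exact ((hTmem i j).mp h).1
      · have hcons : satFDs (insert (factG n m k i j) E) sigmaGap := by
          rw [satFDs_sigmaGap_iff]
          constructor
          · intro f hf g hg hA
            rcases Finset.mem_insert.mp hf with rfl | hf <;>
              rcases Finset.mem_insert.mp hg with rfl | hg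
            · rfl
            · rcases mem_dbk.mp (hsub hg) with ⟨i', j', p', v', rfl⟩ | ⟨i', j', rfl⟩
              · exact absurd hA (by simp)
              · rfl
            · rcases mem_dbk.mp (hsub hf) with ⟨i', j', p', v', rfl⟩ | ⟨i', j', rfl⟩
              · exact absurd hA (by simp)
              · rfl
            · exact hVar _ hf _ hg hA
          · intro f hf g hg hA
            rcases Finset.mem_insert.mp hf with rfl | hf <;>
              rcases Finset.mem_insert.mp hg with rfl | hg
            · rfl
            · rcases mem_dbk.mp (hsub hg) with ⟨i', j', p', v', rfl⟩ | ⟨i', j', rfl⟩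
              · simp only [factF_Clause, factG_Clause, GConst.clid.injEq] at hA
                obtain ⟨h1, h2, hlv⟩ := hA
                refine absurd ⟨p', ?_⟩ h
                rw [h1, ← hσ _ _ _ _ hg]
                exact hlv.symm
              · rfl
            · rcases mem_dbk.mp (hsub hf) with ⟨i', j', p', v', rfl⟩ | ⟨i', j', rfl⟩
              · simp only [factF_Clause, factG_Clause, GConst.clid.injEq] at hA
                obtain ⟨h1, h2, hlv⟩ := hA
                refine absurd ⟨p', ?_⟩ h
                rw [← h1, ← hσ _ _ _ _ hf]
                exact hlv
              · rfl
            · exact hCl _ hf _ hg hA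
        have heq := hmax _ (Finset.subset_insert _ _)
          (Finset.insert_subset (factG_mem_dbk C i j) hsub) hcons
        rw [← heq]
        exact Finset.mem_insert_self _ _
  refine ⟨σ, T, ⟨?_, ?_⟩, ?_⟩
  · rintro ⟨i, j⟩ hq
    exact ((hTmem i j).mp hq).2
  · intro i p
    by_contra hbad
    push_neg at hbad
    have hlv : lval (C i p) (σ (C i p).1) = true :=
      bool_ne_false (hbad i ⟨0, hk⟩ p rfl).1
    have hcons : satFDs (insert (factF n m k C i ⟨0, hk⟩ p (!σ (C i p).1)) E) sigmaGap := by
      rw [satFDs_sigmaGap_iff]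
      constructor
      · intro f hf g hg hA
        rcases Finset.mem_insert.mp hf with rfl | hf <;>
          rcases Finset.mem_insert.mp hg with rfl | hg
        · rfl
        · rcases mem_dbk.mp (hsub hg) with ⟨i', j', p', v', rfl⟩ | ⟨i', j', rfl⟩
          · simp only [factF_Var, GConst.var.injEq] at hA
            obtain ⟨h1, h2⟩ := hbad i' j' p' hA.symm
            rcases ((memF i' j' p' v').mp hg).2 with hl | hnT
            · rw [(memF i' j' p' v').mp hg |>.1] at hl
              exact absurd hl h1
            · exact absurd h2 hnT
          · exact absurd hA (by simp)
        · rcases mem_dbk.mp (hsub hf) with ⟨i', j', p', v', rfl⟩ | ⟨i', j', rfl⟩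
          · simp only [factF_Var, GConst.var.injEq] at hA
            obtain ⟨h1, h2⟩ := hbad i' j' p' hA
            rcases ((memF i' j' p' v').mp hf).2 with hl | hnT
            · rw [(memF i' j' p' v').mp hf |>.1] at hl
              exact absurd hl h1
            · exact absurd h2 hnT
          · exact absurd hA (by simp)
        · exact hVar _ hf _ hg hA
      · intro f hf g hg hA
        rcases Finset.mem_insert.mp hf with rfl | hf <;>
          rcases Finset.mem_insert.mp hg with rfl | hg
        · rfl
        · rcases mem_dbk.mp (hsub hg) with ⟨i', j', p', v', rfl⟩ | ⟨i', j', rfl⟩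
          · simp only [factF_Clause, GConst.clid.injEq] at hA
            simp only [factF_LValue, GConst.bit.injEq]
            exact hA.2.2
          · simp only [factF_Clause, factG_Clause, GConst.clid.injEq, lval_flip,
              hlv] at hA
            exact absurd hA.2.2 (by simp)
        · rcases mem_dbk.mp (hsub hf) with ⟨i', j', p', v', rfl⟩ | ⟨i', j', rfl⟩
          · simp only [factF_Clause, GConst.clid.injEq] at hA
            simp only [factF_LValue, GConst.bit.injEq]
            exact hA.2.2
          · simp only [factF_Clause, factG_Clause, GConst.clid.injEq, lval_flip,
              hlv] at hA
            exact absurd hA.2.2 (by simp)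
        · exact hCl _ hf _ hg hA
    have heq := hmax _ (Finset.subset_insert _ _)
      (Finset.insert_subset (factF_mem_dbk C i ⟨0, hk⟩ p _) hsub) hcons
    have hmm : factF n m k C i ⟨0, hk⟩ p (!σ (C i p).1) ∈ E := by
      rw [← heq]; exact Finset.mem_insert_self _ _
    have := ((memF _ _ _ _).mp hmm).1
    exact absurd this (by simp)
  · ext f
    constructor
    · intro hf
      rcases mem_dbk.mp (hsub hf) with ⟨i, j, p, v, rfl⟩ | ⟨i, j, rfl⟩
      · exact (factF_mem_repDB hd).mpr ((memF i j p v).mp hf)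
      · exact factG_mem_repDB.mpr ((memG i j).mp hf)
    · intro hf
      rcases mem_dbk.mp (repDB_subset C σ T hf) with ⟨i, j, p, v, rfl⟩ | ⟨i, j, rfl⟩
      · exact (memF i j p v).mpr ((factF_mem_repDB hd).mp hf)
      · exact (memG i j).mpr (factG_mem_repDB.mp hf)

lemma repDB_inj {C : Fin m → Fin 3 → Fin n × Bool}
    (hd : ∀ i : Fin m, Function.Injective fun p => (C i p).1)
    {σ₁ σ₂ : Fin n → Bool} {T₁ T₂ : Finset (Fin m × Fin k)}
    (h1 : goodPair C σ₁ T₁) (h2 : goodPair C σ₂ T₂)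
    (heq : repDB n m k C σ₁ T₁ = repDB n m k C σ₂ T₂) :
    (∀ i p, σ₁ (C i p).1 = σ₂ (C i p).1) ∧ T₁ = T₂ := by
  have hσ : ∀ i p, σ₁ (C i p).1 = σ₂ (C i p).1 := by
    intro i p
    obtain ⟨i', j', p', hx, hc⟩ := h1.2 i p
    have hmem : factF n m k C i' j' p' (σ₁ (C i' p').1) ∈ repDB n m k C σ₁ T₁ :=
      (factF_mem_repDB hd).mpr ⟨rfl, hc⟩
    rw [heq] at hmem
    have := ((factF_mem_repDB hd).mp hmem).1
    rw [hx] at this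
    exact this
  refine ⟨hσ, ?_⟩
  have hct : ∀ i : Fin m, clauseTrue C σ₁ i ↔ clauseTrue C σ₂ i := by
    intro i
    constructor <;> rintro ⟨p, hp⟩ <;> refine ⟨p, ?_⟩
    · rw [← hσ i p]; exact hp
    · rw [hσ i p]; exact hp
  ext ⟨i, j⟩
  constructor
  · intro hq
    have hmem : factG n m k i j ∈ repDB n m k C σ₁ T₁ := factG_mem_repDB.mpr (Or.inl hq)
    rw [heq] at hmem
    rcases factG_mem_repDB.mp hmem with h | h
    · exact h
    · exact absurd ((hct i).mp (h1.1 _ hq)) h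
  · intro hq
    have hmem : factG n m k i j ∈ repDB n m k C σ₂ T₂ := factG_mem_repDB.mpr (Or.inl hq)
    rw [← heq] at hmem
    rcases factG_mem_repDB.mp hmem with h | h
    · exact h
    · exact absurd ((hct i).mpr (h2.1 _ hq)) h

/-- `x` is a bad variable for `(τ, S)`. -/
def badVar (C : Fin m → Fin 3 → Fin n × Bool) (τ : Fin n → Bool)
    (S : Finset (Fin m × Fin k)) (x : Fin n) : Prop :=
  (∃ i p, (C i p).1 = x) ∧
  ∀ i p, (C i p).1 = x → lval (C i p) (τ x) = true ∧ ∀ j : Fin k, (i, j) ∈ S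

/-- Repaired assignment: flip the bad variables. -/
noncomputable def fixA (C : Fin m → Fin 3 → Fin n × Bool) (τ : Fin n → Bool)
    (S : Finset (Fin m × Fin k)) : Fin n → Bool :=
  fun x => if badVar C τ S x then !(τ x) else τ x

/-- Repaired set of copies. -/
noncomputable def fixS (C : Fin m → Fin 3 → Fin n × Bool) (τ : Fin n → Bool)
    (S : Finset (Fin m × Fin k)) : Finset (Fin m × Fin k) :=
  S.filter fun q => clauseTrue C (fixA C τ S) q.1

lemma fix_good {C : Fin m → Fin 3 → Fin n × Bool} (hk : 0 < k) (τ : Fin n → Bool)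
    {S : Finset (Fin m × Fin k)} :
    goodPair C (fixA C τ S) (fixS C τ S) := by
  constructor
  · intro q hq; exact (Finset.mem_filter.mp hq).2
  · intro i p
    by_cases hb : badVar C τ S (C i p).1
    · refine ⟨i, ⟨0, hk⟩, p, rfl, Or.inl ?_⟩
      have hfx : fixA C τ S (C i p).1 = !(τ (C i p).1) := if_pos hb
      rw [hfx, lval_flip, (hb.2 i p rfl).1]
      rfl
    · obtain ⟨i', p', hx, hcase⟩ : ∃ i' p', (C i' p').1 = (C i p).1 ∧
          (lval (C i' p') (τ (C i p).1) = false ∨ ∃ j, (i', j) ∉ S) := by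
        by_contra hno
        push_neg at hno
        refine hb ⟨⟨i, p, rfl⟩, ?_⟩
        intro i'' p'' hx''
        obtain ⟨ha, hb'⟩ := hno i'' p'' hx''
        exact ⟨bool_ne_false ha, fun j => hb' j⟩
      have hfx : fixA C τ S (C i p).1 = τ (C i p).1 := if_neg hb
      rcases hcase with hl | ⟨j, hj⟩
      · exact ⟨i', ⟨0, hk⟩, p', hx, Or.inl (by rw [hx, hfx]; exact hl)⟩
      · exact ⟨i', j, p', hx, Or.inr fun hmem => hj (Finset.mem_filter.mp hmem).1⟩

lemma fix_recover {C : Fin m → Fin 3 → Fin n × Bool} {τ : Fin n → Bool}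
    {S : Finset (Fin m × Fin k)} (hS : ∀ q ∈ S, clauseTrue C τ q.1) :
    S = fixS C τ S ∪
      Finset.univ.filter (fun q : Fin m × Fin k =>
        clauseTrue C τ q.1 ∧ ¬ clauseTrue C (fixA C τ S) q.1) := by
  ext ⟨i, j⟩
  rw [Finset.mem_union, fixS, Finset.mem_filter, Finset.mem_filter]
  constructor
  · intro hq
    by_cases h : clauseTrue C (fixA C τ S) i
    · exact Or.inl ⟨hq, h⟩
    · exact Or.inr ⟨Finset.mem_univ _, hS _ hq, h⟩
  · rintro (⟨hq, -⟩ | ⟨-, hct, hcf⟩)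
    · exact hq
    · obtain ⟨p, hp⟩ := hct
      have hne : fixA C τ S (C i p).1 ≠ τ (C i p).1 := by
        intro he
        exact hcf ⟨p, by rw [he]; exact hp⟩
      have hb : badVar C τ S (C i p).1 := by
        by_contra hnb
        exact hne (if_neg hnb)
      exact (hb.2 i p rfl).2 j

lemma good_no_bad {C : Fin m → Fin 3 → Fin n × Bool} {σ : Fin n → Bool}
    {T : Finset (Fin m × Fin k)} (hg : goodPair C σ T) (x : Fin n) :
    ¬ badVar C σ T x := by
  rintro ⟨⟨i, p, hx⟩, hall⟩
  obtain ⟨i', j', p', hx', hc⟩ := hg.2 i p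
  have hthis := hall i' p' (hx'.trans hx)
  rcases hc with hl | hj
  · rw [show σ (C i' p').1 = σ x from by rw [hx'.trans hx]] at hl
    rw [hthis.1] at hl
    exact absurd hl (by simp)
  · exact hj (hthis.2 j')

lemma fixA_of_good {C : Fin m → Fin 3 → Fin n × Bool} {σ : Fin n → Bool}
    {T : Finset (Fin m × Fin k)} (hg : goodPair C σ T) : fixA C σ T = σ :=
  funext fun x => if_neg (good_no_bad hg x)

lemma fixS_of_good {C : Fin m → Fin 3 → Fin n × Bool} {σ : Fin n → Bool}
    {T : Finset (Fin m × Fin k)} (hg : goodPair C σ T) : fixS C σ T = T := by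
  rw [fixS]
  rw [Finset.filter_true_of_mem]
  intro q hq
  rw [fixA_of_good hg]
  exact hg.1 q hq

end GapAux

/-- There is a map `Map` from truth assignments of `φ` to sets of databases such that
(1) `Map(τ) ⊆ rep(db_k(φ),Σ)`, (2) every repair of `db_k(φ)` lies in some `Map(τ)`, and
(3) `|Map(τ)| = 2^{k·c_τ}` where `c_τ` is the number of clauses true under `τ`. -/
theorem stmt_16 (n m k : ℕ) (hn : 0 < n) (hm : 0 < m) (hk : 0 < k)
    (C : Fin m → Fin 3 → Fin n × Bool)
    (hdistinct : ∀ i : Fin m, Function.Injective fun p => (C i p).1) :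
    ∃ Map : (Fin n → Bool) → Finset (Finset (DBFact Unit Attr4 (GConst n m k))),
      (∀ τ, Map τ ⊆ rep (dbk n m k C) sigmaGap) ∧
      (∀ D' ∈ rep (dbk n m k C) sigmaGap, ∃ τ, D' ∈ Map τ) ∧
      (∀ τ, (Map τ).card =
        2 ^ (k * (Finset.univ.filter fun i => clauseTrue C τ i).card)) := by
  classical
  refine ⟨fun τ => (Finset.univ.filter fun q : Fin m × Fin k =>
      clauseTrue C τ q.1).powerset.image
      (fun S => repDB n m k C (fixA C τ S) (fixS C τ S)), ?_, ?_, ?_⟩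
  · intro τ E hE
    obtain ⟨S, hS, rfl⟩ := Finset.mem_image.mp hE
    exact mem_rep_iff.mpr (repDB_isRepair hdistinct hk (fix_good hk τ))
  · intro D' hD'
    obtain ⟨σ, T, hg, rfl⟩ := repair_eq_repDB hdistinct hk (mem_rep_iff.mp hD')
    refine ⟨σ, Finset.mem_image.mpr ⟨T, ?_, ?_⟩⟩
    · rw [Finset.mem_powerset]
      intro q hq
      exact Finset.mem_filter.mpr ⟨Finset.mem_univ _, hg.1 q hq⟩
    · rw [fixA_of_good hg, fixS_of_good hg]
  · intro τ
    rw [Finset.card_image_of_injOn, Finset.card_powerset]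
    · congr 1
      have hprod : (Finset.univ.filter fun q : Fin m × Fin k => clauseTrue C τ q.1) =
          (Finset.univ.filter fun i => clauseTrue C τ i) ×ˢ (Finset.univ : Finset (Fin k)) := by
        ext ⟨i, j⟩
        simp [Finset.mem_filter, Finset.mem_product]
      rw [hprod, Finset.card_product, Finset.card_univ, Fintype.card_fin, Nat.mul_comm]
    · intro S₁ h₁ S₂ h₂ heq
      have hS₁ : ∀ q ∈ S₁, clauseTrue C τ q.1 := by
        intro q hq
        exact (Finset.mem_filter.mp (Finset.mem_powerset.mp h₁ hq)).2
      have hS₂ : ∀ q ∈ S₂, clauseTrue C τ q.1 := by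
        intro q hq
        exact (Finset.mem_filter.mp (Finset.mem_powerset.mp h₂ hq)).2
      obtain ⟨hσeq, hSeq⟩ := repDB_inj hdistinct (fix_good hk τ) (fix_good hk τ) heq
      have hA : fixA C τ S₁ = fixA C τ S₂ := by
        funext x
        by_cases hocc : ∃ i p, (C i p).1 = x
        · obtain ⟨i, p, rfl⟩ := hocc
          exact hσeq i p
        · have hb₁ : ¬ badVar C τ S₁ x := fun hb => hocc hb.1
          have hb₂ : ¬ badVar C τ S₂ x := fun hb => hocc hb.1
          rw [fixA, fixA, if_neg hb₁, if_neg hb₂]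
      rw [fix_recover hS₁, fix_recover hS₂, hSeq, hA]
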